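/- arXiv:2404.13456 — 2 statements merged into one kernel-verified Lean document; each statement's English description precedes it below -/
import Mathlib

section
/- Let l, u be real numbers with l < u and let K ≥ 1 be a natural number. Define the degree-K Bernstein polynomial over-approximation of ReLU on [l,u] by g_K(z) = Σ_{k=0}^{K} max{0, l + (k/K)(u − l)} · C(K,k) · (u − z)^{K−k} (z − l)^k / (u − l)^K. Then for every z ∈ [l, u], max{0, z} ≤ g_K(z). -/
/-!
ReLU is convex, and the Bernstein operator dominates convex functions: the Bernstein basis at
`x` is a probability vector whose barycentre of the nodes `ν / n` is `x` itself, so Jensen's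
inequality gives `f x ≤ ∑ f (ν / n) bₙ,ᵥ(x)`. The interval `[l, u]` is reduced to `[0, 1]` by the
affine change of variables `x = (z - l) / (u - l)`.
-/

open Polynomial Finset Set

namespace bernsteinPolynomial

theorem eval_nonneg {x : ℝ} (hx : x ∈ Icc (0 : ℝ) 1) (n ν : ℕ) :
    0 ≤ (bernsteinPolynomial ℝ n ν).eval x := by
  have h₁ : 0 ≤ 1 - x := sub_nonneg.mpr hx.2
  have h₀ := hx.1
  simp only [bernsteinPolynomial, eval_mul, eval_pow, eval_natCast, eval_sub, eval_one, eval_X]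
  positivity

theorem sum_eval (n : ℕ) (x : ℝ) :
    ∑ ν ∈ range (n + 1), (bernsteinPolynomial ℝ n ν).eval x = 1 := by
  rw [← eval_finsetSum, bernsteinPolynomial.sum, eval_one]

theorem sum_eval_mul_div {n : ℕ} (hn : n ≠ 0) (x : ℝ) :
    ∑ ν ∈ range (n + 1), (bernsteinPolynomial ℝ n ν).eval x * (ν / n) = x := by
  have h := congrArg (eval x) (bernsteinPolynomial.sum_smul (R := ℝ) n)
  simp only [nsmul_eq_mul, eval_finsetSum, eval_mul, eval_natCast, eval_X] at h
  have hn' : (n : ℝ) ≠ 0 := Nat.cast_ne_zero.mpr hn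
  calc ∑ ν ∈ range (n + 1), (bernsteinPolynomial ℝ n ν).eval x * (ν / n)
      = (∑ ν ∈ range (n + 1), ν * (bernsteinPolynomial ℝ n ν).eval x) / n := by
        rw [sum_div]
        exact sum_congr rfl fun ν _ => by ring
    _ = x := by rw [h, mul_div_cancel_left₀ x hn']

theorem eval_sub_div_sub {l u z : ℝ} (hlu : u ≠ l) {n ν : ℕ} (hν : ν ≤ n) :
    (bernsteinPolynomial ℝ n ν).eval ((z - l) / (u - l)) =
      n.choose ν * ((u - z) ^ (n - ν) * (z - l) ^ ν / (u - l) ^ n) := by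
  have hul : u - l ≠ 0 := sub_ne_zero.mpr hlu
  have h1 : 1 - (z - l) / (u - l) = (u - z) / (u - l) := by field_simp; ring
  simp only [bernsteinPolynomial, eval_mul, eval_pow, eval_natCast, eval_sub, eval_one, eval_X]
  rw [h1, div_pow, div_pow, ← Nat.sub_add_cancel hν, pow_add, Nat.add_sub_cancel]
  field_simp

end bernsteinPolynomial

theorem ConvexOn.le_sum_eval_bernsteinPolynomial {f : ℝ → ℝ} (hf : ConvexOn ℝ (Icc 0 1) f)
    {n : ℕ} (hn : n ≠ 0) {x : ℝ} (hx : x ∈ Icc (0 : ℝ) 1) :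
    f x ≤ ∑ ν ∈ range (n + 1), f (ν / n) * (bernsteinPolynomial ℝ n ν).eval x := by
  have hnode : ∀ ν ∈ range (n + 1), (ν / n : ℝ) ∈ Icc (0 : ℝ) 1 := fun ν hν =>
    ⟨by positivity, div_le_one_of_le₀ (by exact_mod_cast Nat.lt_succ_iff.mp (mem_range.mp hν))
      (Nat.cast_nonneg n)⟩
  have := hf.map_sum_le (fun ν _ => bernsteinPolynomial.eval_nonneg hx n ν)
    (bernsteinPolynomial.sum_eval n x) hnode
  simp only [smul_eq_mul, bernsteinPolynomial.sum_eval_mul_div hn] at this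
  simpa only [mul_comm] using this

theorem ConvexOn.le_sum_bernstein_Icc {f : ℝ → ℝ} {l u : ℝ} (hlu : l < u)
    (hf : ConvexOn ℝ (Icc l u) f) {n : ℕ} (hn : n ≠ 0) {z : ℝ} (hz : z ∈ Icc l u) :
    f z ≤ ∑ ν ∈ range (n + 1), f (l + (ν / n) * (u - l)) * n.choose ν *
      ((u - z) ^ (n - ν) * (z - l) ^ ν / (u - l) ^ n) := by
  have hul : 0 < u - l := sub_pos.mpr hlu
  have hmaps : Icc (0 : ℝ) 1 ⊆ AffineMap.lineMap l u ⁻¹' Icc l u := fun t ht => by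
    rw [Set.mem_preimage, AffineMap.lineMap_apply_ring']
    constructor <;> nlinarith [ht.1, ht.2]
  have hg := (hf.comp_affineMap (AffineMap.lineMap l u)).subset hmaps (convex_Icc 0 1)
  have hx : (z - l) / (u - l) ∈ Icc (0 : ℝ) 1 :=
    ⟨div_nonneg (sub_nonneg.mpr hz.1) hul.le, div_le_one_of_le₀ (by linarith [hz.2]) hul.le⟩
  have hfz : f z = (f ∘ AffineMap.lineMap l u) ((z - l) / (u - l)) := by
    rw [Function.comp_apply, AffineMap.lineMap_apply_ring', div_mul_cancel₀ _ hul.ne']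
    ring_nf
  rw [hfz]
  refine (hg.le_sum_eval_bernsteinPolynomial hn hx).trans_eq (sum_congr rfl fun ν hν => ?_)
  rw [bernsteinPolynomial.eval_sub_div_sub hlu.ne' (Nat.lt_succ_iff.mp (mem_range.mp hν)),
    Function.comp_apply, AffineMap.lineMap_apply_ring', add_comm, mul_assoc]

/-- Soundness of the Bernstein polynomial over-approximation of ReLU:
the degree-K Bernstein polynomial of ReLU on [l,u] upper-bounds ReLU on [l,u]. -/
theorem bernstein_over_approximates_relu
    (l u : ℝ) (hlu : l < u) (K : ℕ) (hK : 1 ≤ K) :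
    ∀ z ∈ Set.Icc l u,
      max 0 z ≤ ∑ k ∈ Finset.range (K + 1),
        max 0 (l + ((k : ℝ) / (K : ℝ)) * (u - l)) * (K.choose k : ℝ) *
          ((u - z) ^ (K - k) * (z - l) ^ k / (u - l) ^ K) := fun _ hz =>
  ((convexOn_const 0 (convex_Icc l u)).sup (convexOn_id (convex_Icc l u))).le_sum_bernstein_Icc
    hlu (Nat.one_le_iff_ne_zero.mp hK) hz
end

section
/- Let l, u be real numbers with l < u, let K ≥ 1 be a natural number, and let f : ℝ → ℝ be convex on [l, u]. With (B_K f)(z) = Σ_{k=0}^{K} f(l + (k/K)(u − l)) · C(K,k) · (u − z)^{K−k} (z − l)^k / (u − l)^K the degree-K Bernstein polynomial of f on [l,u], for every z ∈ [l, u] one has (B_{K+1} f)(z) ≤ (B_K f)(z); i.e., the Bernstein over-approximations of a convex function become tighter as the degree increases. -/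
/-!
Write `B_K g (s, t) = ∑ₖ C(K,k) g(k/K) s^(K-k) t^k` for the homogeneous Bernstein sum of `g` on
`[0,1]`. Multiplying by `s + t = 1` expresses `B_K g` in the degree-`(K+1)` basis, with
coefficient `C(K,k) g(k/K) + C(K,k-1) g((k-1)/K)` at `s^(K+1-k) t^k`. Since
`k/(K+1)` is the convex combination of the nodes `(k-1)/K` and `k/K` with weights
`k/(K+1)` and `(K+1-k)/(K+1)`, convexity bounds the coefficient `C(K+1,k) g(k/(K+1))` of
`B_(K+1) g` by it. The interval `[l,u]` is reduced to `[0,1]` along `AffineMap.lineMap l u`.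
-/

open Finset Set

theorem div_pow_sub_mul_div_pow {α : Type*} [DivisionCommMonoid α] (a b c : α) {n k : ℕ}
    (hk : k ≤ n) : (a / c) ^ (n - k) * (b / c) ^ k = a ^ (n - k) * b ^ k / c ^ n := by
  rw [div_pow, div_pow, div_mul_div_comm, ← pow_add, Nat.sub_add_cancel hk]

namespace Bernstein

noncomputable def homogeneousSum (g : ℝ → ℝ) (K : ℕ) (s t : ℝ) : ℝ :=
  ∑ k ∈ range (K + 1), g (k / K) * K.choose k * (s ^ (K - k) * t ^ k)

variable {g : ℝ → ℝ} {K : ℕ}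

theorem homogeneousSum_mul_add (s t : ℝ) :
    homogeneousSum g K s t * (s + t) =
      ∑ j ∈ range (K + 1),
          (K.choose (j + 1) * g ((j + 1) / K) + K.choose j * g (j / K)) *
            (s ^ (K - j) * t ^ (j + 1)) +
        g 0 * s ^ (K + 1) := by
  have hs : homogeneousSum g K s t * s =
      ∑ k ∈ range (K + 2), g (k / K) * K.choose k * (s ^ (K + 1 - k) * t ^ k) := by
    rw [homogeneousSum, sum_mul, sum_range_succ _ (K + 1), Nat.choose_succ_self]
    simp only [Nat.cast_zero, mul_zero, zero_mul, add_zero]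
    refine sum_congr rfl fun k hk => ?_
    rw [Nat.sub_add_comm (Nat.lt_succ_iff.mp (mem_range.mp hk)), pow_succ]
    ring
  rw [mul_add, hs, homogeneousSum, sum_mul, sum_range_succ', add_right_comm, ← sum_add_distrib]
  push_cast
  simp only [Nat.choose_zero_right, zero_div, Nat.cast_one, mul_one, pow_zero, pow_succ]
  congr 1
  exact sum_congr rfl fun j _ => by ring

theorem choose_succ_mul_le (hg : ConvexOn ℝ (Icc 0 1) g) (hK : 1 ≤ K) {j : ℕ} (hj : j ≤ K) :
    (K + 1).choose (j + 1) * g ((j + 1) / (K + 1)) ≤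
      K.choose (j + 1) * g ((j + 1) / K) + K.choose j * g (j / K) := by
  rcases hj.lt_or_eq with hlt | rfl
  · have hjK : (j : ℝ) + 1 ≤ K := by exact_mod_cast hlt
    have hK0 : (0 : ℝ) < K := by linarith [(j.cast_nonneg : (0 : ℝ) ≤ j)]
    have hleft : (j : ℝ) / K ∈ Icc (0 : ℝ) 1 :=
      ⟨by positivity, (div_le_one hK0).2 (by linarith)⟩
    have hright : ((j : ℝ) + 1) / K ∈ Icc (0 : ℝ) 1 :=
      ⟨by positivity, (div_le_one hK0).2 hjK⟩
    have hconv := hg.2 hleft hright (by positivity : (0 : ℝ) ≤ (j + 1) / (K + 1))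
      (div_nonneg (by linarith) (by positivity) : (0 : ℝ) ≤ (K - j) / (K + 1))
      (by field_simp; ring)
    have hmid : ((j : ℝ) + 1) / (K + 1) * (j / K) + (K - j) / (K + 1) * ((j + 1) / K) =
        (j + 1) / (K + 1) := by
      field_simp; ring
    have hleftWeight : ((K + 1).choose (j + 1) : ℝ) * ((j + 1) / (K + 1)) = K.choose j := by
      rw [mul_div_assoc', div_eq_iff (by positivity)]
      exact_mod_cast (Nat.add_one_mul_choose_eq K j).symm.trans (mul_comm _ _)
    have hrightWeight : ((K + 1).choose (j + 1) : ℝ) * ((K - j) / (K + 1)) = K.choose (j + 1) := by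
      rw [mul_div_assoc', div_eq_iff (by positivity)]
      have := Nat.choose_mul_succ_eq K (j + 1)
      rw [show K + 1 - (j + 1) = K - j by omega] at this
      rw [← Nat.cast_sub hlt.le]
      exact_mod_cast this.symm
    simp only [smul_eq_mul, hmid] at hconv
    calc ((K + 1).choose (j + 1) : ℝ) * g ((j + 1) / (K + 1))
        ≤ (K + 1).choose (j + 1) *
            ((j + 1) / (K + 1) * g (j / K) + (K - j) / (K + 1) * g ((j + 1) / K)) := by
          gcongr
      _ = K.choose (j + 1) * g ((j + 1) / K) + K.choose j * g (j / K) := by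
          rw [← hleftWeight, ← hrightWeight]; ring
  · have hj0 : (j : ℝ) ≠ 0 := by exact_mod_cast (Nat.one_le_iff_ne_zero.mp hK)
    simp [Nat.choose_succ_self, div_self hj0, div_self (by positivity : (j : ℝ) + 1 ≠ 0)]

theorem homogeneousSum_succ_le (hg : ConvexOn ℝ (Icc 0 1) g) (hK : 1 ≤ K) {s t : ℝ}
    (hs : 0 ≤ s) (ht : 0 ≤ t) (hst : s + t = 1) :
    homogeneousSum g (K + 1) s t ≤ homogeneousSum g K s t := by
  calc homogeneousSum g (K + 1) s t
      = ∑ j ∈ range (K + 1), (K + 1).choose (j + 1) * g ((j + 1) / (K + 1)) *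
            (s ^ (K - j) * t ^ (j + 1)) + g 0 * s ^ (K + 1) := by
        rw [homogeneousSum, sum_range_succ']
        push_cast
        simp [mul_comm]
    _ ≤ ∑ j ∈ range (K + 1),
          (K.choose (j + 1) * g ((j + 1) / K) + K.choose j * g (j / K)) *
            (s ^ (K - j) * t ^ (j + 1)) + g 0 * s ^ (K + 1) := by
        gcongr with j hj
        exact choose_succ_mul_le hg hK (Nat.lt_succ_iff.mp (mem_range.mp hj))
    _ = homogeneousSum g K s t := by rw [← homogeneousSum_mul_add, hst, mul_one]

end Bernstein

/-- Monotonicity of Bernstein polynomials of a convex function: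
the degree-(K+1) Bernstein polynomial on [l,u] is pointwise below the
degree-K one on [l,u]. -/
theorem bernstein_monotone_in_degree_for_convex
    (l u : ℝ) (hlu : l < u) (K : ℕ) (hK : 1 ≤ K)
    (f : ℝ → ℝ) (hf : ConvexOn ℝ (Set.Icc l u) f) :
    ∀ z ∈ Set.Icc l u,
      (∑ k ∈ Finset.range (K + 2),
        f (l + ((k : ℝ) / ((K : ℝ) + 1)) * (u - l)) * ((K + 1).choose k : ℝ) *
          ((u - z) ^ (K + 1 - k) * (z - l) ^ k / (u - l) ^ (K + 1))) ≤
      ∑ k ∈ Finset.range (K + 1),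
        f (l + ((k : ℝ) / (K : ℝ)) * (u - l)) * (K.choose k : ℝ) *
          ((u - z) ^ (K - k) * (z - l) ^ k / (u - l) ^ K) := by
  intro z hz
  have hul : 0 < u - l := sub_pos.2 hlu
  have hg : ConvexOn ℝ (Icc 0 1) (f ∘ AffineMap.lineMap (k := ℝ) l u) :=
    (hf.comp_affineMap _).subset
      ((convex_Icc l u).mapsTo_lineMap (left_mem_Icc.2 hlu.le) (right_mem_Icc.2 hlu.le))
      (convex_Icc 0 1)
  have key := Bernstein.homogeneousSum_succ_le hg hK
    (div_nonneg (sub_nonneg.2 hz.2) hul.le) (div_nonneg (sub_nonneg.2 hz.1) hul.le)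
    (by field_simp; ring)
  simp only [Bernstein.homogeneousSum, Function.comp_apply, AffineMap.lineMap_apply_ring'] at key
  push_cast at key
  convert key using 2 with k hk k hk <;>
    rw [add_comm l, div_pow_sub_mul_div_pow _ _ _ (Nat.lt_succ_iff.mp (mem_range.mp hk))]
end
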